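/- (Theorem 2(I), symmetric case, contrapositive form.) Let S be a symmetric Hermitian tensor in sℍ[m,n] that has a symmetric positive Hermitian decomposition. Then for every integer k ≥ m+1 there exists a truncated moment sequence z : {α ∈ ℕ^{2n} : |α| ≤ 2k} → ℝ such that M_k(z) ⪰ 0, L_{h₁}^{(k)}(z) = 0 where h₁(x) = ‖x‖² − 1 on ℝ^{2n}, and Re(S I J) = L_z(R_{IJ}), Im(S I J) = L_z(T_{IJ}) for all multi-indices I, J. (Hence, if this relaxation is infeasible for some k, S has no symmetric positive Hermitian decomposition, i.e., the corresponding symmetric mixed state is not symmetric separable.) -/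

import Mathlib

/-!
Write each unit vector `u_i` of the decomposition as a point `x_i ∈ ℝ^{2n}` of the unit sphere
and take for `z` the moments of the atomic measure `Σ λ_i δ_{x_i}`. Its moment matrix is the sum
of the rank-one matrices `λ_i (x_i^α x_i^β)_{α,β}`, its localizing matrices vanish because
`h₁(x_i) = 0`, and its Riesz functional is `p ↦ Σ λ_i p(x_i)`, which sends `P_{IJ}` to `S I J`.
-/

/-- The complex vector `u(x) = x_Re + i·x_Im ∈ ℂ^n` from `x ∈ ℝ^{2n}`, whose
coordinates are indexed by `Fin n × Fin 2` (real parts at `0`, imaginary at `1`). -/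
noncomputable def uS (n : ℕ) (x : Fin n × Fin 2 → ℝ) (j : Fin n) : ℂ :=
  (x (j, 0) : ℝ) + Complex.I * (x (j, 1) : ℝ)

/-- `P_{IJ}(x) = Π_k u(x)(I k) · conj(u(x)(J k))`. -/
noncomputable def PfunS (m n : ℕ) (I J : Fin m → Fin n) (x : Fin n × Fin 2 → ℝ) : ℂ :=
  ∏ k, uS n x (I k) * (starRingEnd ℂ) (uS n x (J k))

/-- The sphere polynomial `h₁(x) = ‖x‖² − 1` on `ℝ^{2n}`. -/
noncomputable def spherePolyS (n : ℕ) : MvPolynomial (Fin n × Fin 2) ℝ :=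
  (∑ v : Fin n × Fin 2, MvPolynomial.X v ^ 2) - 1

/-- The Riesz functional `L_z(p) = Σ_α p_α z_α`. -/
noncomputable def riesz {V : Type*} (z : (V → ℕ) → ℝ) (p : MvPolynomial V ℝ) : ℝ :=
  ∑ γ ∈ p.support, MvPolynomial.coeff γ p * z ⇑γ

open MvPolynomial Finset

section DiracMoments

variable {V : Type*}

theorem riesz_sum_smul {ι : Type*} [Fintype ι] (c : ι → ℝ) (z : ι → (V → ℕ) → ℝ)
    (p : MvPolynomial V ℝ) :
    riesz (∑ i, c i • z i) p = ∑ i, c i * riesz (z i) p := by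
  simp only [riesz, Finset.sum_apply, Pi.smul_apply, smul_eq_mul, mul_sum]
  rw [sum_comm]
  exact sum_congr rfl fun _ _ => sum_congr rfl fun _ _ => by ring

variable [Fintype V]

def diracMoments (x : V → ℝ) (α : V → ℕ) : ℝ :=
  ∏ v, x v ^ α v

theorem diracMoments_add (x : V → ℝ) (α β : V → ℕ) :
    diracMoments x (α + β) = diracMoments x α * diracMoments x β := by
  simp only [diracMoments, Pi.add_apply, pow_add, prod_mul_distrib]

theorem riesz_diracMoments (x : V → ℝ) (p : MvPolynomial V ℝ) :
    riesz (diracMoments x) p = eval x p :=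
  (eval_eq' x p).symm

theorem sum_coeff_mul_diracMoments_add (x : V → ℝ) (h : MvPolynomial V ℝ) (α : V → ℕ) :
    ∑ γ ∈ h.support, coeff γ h * diracMoments x (α + ⇑γ) = diracMoments x α * eval x h := by
  rw [eval_eq', mul_sum]
  exact sum_congr rfl fun γ _ => by rw [diracMoments_add]; unfold diracMoments; ring

variable {ι : Type*} [Fintype ι]

theorem posSemidef_momentMatrix_sum_smul_diracMoments {κ : Type*} [Fintype κ]
    (c : ι → ℝ) (hc : ∀ i, 0 ≤ c i) (x : ι → V → ℝ) (e : κ → V → ℕ) :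
    (Matrix.of fun a b => (∑ i, c i • diracMoments (x i)) (e a + e b)).PosSemidef := by
  have hrank_one : (Matrix.of fun a b => (∑ i, c i • diracMoments (x i)) (e a + e b)) =
      ∑ i, c i • Matrix.vecMulVec (fun a => diracMoments (x i) (e a))
        (star fun a => diracMoments (x i) (e a)) := by
    ext a b
    simp [Matrix.sum_apply, Matrix.vecMulVec_apply, diracMoments_add]
  rw [hrank_one]
  exact Matrix.posSemidef_sum _ fun i _ => (Matrix.posSemidef_vecMulVec_self_star _).smul (hc i)

theorem localizing_sum_smul_diracMoments_eq_zero (c : ι → ℝ) (x : ι → V → ℝ)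
    (h : MvPolynomial V ℝ) (hx : ∀ i, eval (x i) h = 0) (α : V → ℕ) :
    ∑ γ ∈ h.support, coeff γ h * (∑ i, c i • diracMoments (x i)) (α + ⇑γ) = 0 := by
  simp only [Finset.sum_apply, Pi.smul_apply, smul_eq_mul, mul_sum]
  rw [sum_comm]
  refine sum_eq_zero fun i _ => ?_
  simp_rw [mul_left_comm (coeff _ h) (c i), ← mul_sum, sum_coeff_mul_diracMoments_add, hx i,
    mul_zero]

end DiracMoments

def realCoords {n : ℕ} (v : Fin n → ℂ) : Fin n × Fin 2 → ℝ :=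
  fun p => ![(v p.1).re, (v p.1).im] p.2

theorem uS_realCoords {n : ℕ} (v : Fin n → ℂ) : uS n (realCoords v) = v := by
  funext j
  simp only [uS, realCoords, Matrix.cons_val_zero, Matrix.cons_val_one]
  rw [mul_comm, Complex.re_add_im]

theorem eval_realCoords_spherePolyS {n : ℕ} (v : Fin n → ℂ) :
    eval (realCoords v) (spherePolyS n) = ∑ j, Complex.normSq (v j) - 1 := by
  simp [spherePolyS, realCoords, Fintype.sum_prod_type, Fin.sum_univ_two, Complex.normSq_apply,
    sq]

theorem PfunS_realCoords (m n : ℕ) (I J : Fin m → Fin n) (v : Fin n → ℂ) :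
    PfunS m n I J (realCoords v) = ∏ k, v (I k) * starRingEnd ℂ (v (J k)) := by
  rw [PfunS, uS_realCoords]

theorem relaxation_feasible_of_symPosHermitianDecomp_general (m n : ℕ)
    (S : (Fin m → Fin n) → (Fin m → Fin n) → ℂ)
    (R T : (Fin m → Fin n) → (Fin m → Fin n) → MvPolynomial (Fin n × Fin 2) ℝ)
    (hRT : ∀ I J (x : Fin n × Fin 2 → ℝ), PfunS m n I J x =
      (MvPolynomial.eval x (R I J) : ℂ) + Complex.I * (MvPolynomial.eval x (T I J) : ℂ))
    (hdecomp : ∃ (r : ℕ) (lam : Fin r → ℝ) (u : Fin r → Fin n → ℂ),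
      (∀ i, 0 < lam i) ∧ (∀ i, ∑ j, Complex.normSq (u i j) = 1) ∧
      ∀ I J, S I J = ∑ i, (lam i : ℂ) * ∏ k, u i (I k) * (starRingEnd ℂ) (u i (J k))) :
    ∀ t : ℕ, m + 1 ≤ t → ∃ z : (Fin n × Fin 2 → ℕ) → ℝ,
      Matrix.PosSemidef (Matrix.of
        fun α β : {a : Fin n × Fin 2 → Fin (t + 1) // (∑ v, (a v : ℕ)) ≤ t} =>
          z (fun v => (α.1 v : ℕ) + (β.1 v : ℕ))) ∧
      (∀ α β : Fin n × Fin 2 → ℕ,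
        (∑ v, α v) ≤ t - 1 → (∑ v, β v) ≤ t - 1 →
        (∑ γ ∈ (spherePolyS n).support, MvPolynomial.coeff γ (spherePolyS n) *
          z (fun v => α v + β v + γ v)) = 0) ∧
      ∀ I J, (S I J).re = riesz z (R I J) ∧ (S I J).im = riesz z (T I J) := by
  obtain ⟨r, lam, u, hlam, hunit, hS⟩ := hdecomp
  intro t _
  set x := fun i => realCoords (u i)
  have hS_eval : ∀ I J, S I J = ∑ i, (lam i : ℂ) *
      ((eval (x i) (R I J) : ℂ) + Complex.I * (eval (x i) (T I J) : ℂ)) := by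
    intro I J
    simp only [hS, x, ← hRT, PfunS_realCoords]
  have hriesz : ∀ p, riesz (∑ i, lam i • diracMoments (x i)) p = ∑ i, lam i * eval (x i) p := by
    intro p
    simp only [riesz_sum_smul, riesz_diracMoments]
  refine ⟨∑ i, lam i • diracMoments (x i),
    posSemidef_momentMatrix_sum_smul_diracMoments lam (fun i => (hlam i).le) x _,
    fun α β _ _ => localizing_sum_smul_diracMoments_eq_zero lam x _
      (fun i => by simp [x, eval_realCoords_spherePolyS, hunit]) (α + β),
    fun I J => ⟨?_, ?_⟩⟩
  · simp [hS_eval, hriesz, Complex.re_sum]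
  · simp [hS_eval, hriesz, Complex.im_sum]

/-- Theorem 2(I), symmetric case, contrapositive form: if a symmetric
Hermitian tensor `S ∈ sℍ[m,n]` has a symmetric positive Hermitian decomposition, then
for every `k ≥ m + 1` there is a truncated moment sequence `z` on `|α| ≤ 2k` with
`M_k(z) ⪰ 0`, `L_{h₁}^{(k)}(z) = 0`, and `Re(S I J) = L_z(R_{IJ})`,
`Im(S I J) = L_z(T_{IJ})` for all multi-indices `I, J`. -/
theorem relaxation_feasible_of_symPosHermitianDecomp (m n : ℕ)
    (S : (Fin m → Fin n) → (Fin m → Fin n) → ℂ)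
    (hHerm : ∀ I J, S I J = (starRingEnd ℂ) (S J I))
    (hSym : ∀ σ : Equiv.Perm (Fin m), ∀ I J, S (I ∘ σ) (J ∘ σ) = S I J)
    (R T : (Fin m → Fin n) → (Fin m → Fin n) → MvPolynomial (Fin n × Fin 2) ℝ)
    (hdegR : ∀ I J, (R I J).totalDegree ≤ 2 * m)
    (hdegT : ∀ I J, (T I J).totalDegree ≤ 2 * m)
    (hRT : ∀ I J (x : Fin n × Fin 2 → ℝ), PfunS m n I J x =
      (MvPolynomial.eval x (R I J) : ℂ) + Complex.I * (MvPolynomial.eval x (T I J) : ℂ))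
    (hdecomp : ∃ (r : ℕ) (lam : Fin r → ℝ) (u : Fin r → Fin n → ℂ),
      (∀ i, 0 < lam i) ∧ (∀ i, ∑ j, Complex.normSq (u i j) = 1) ∧
      ∀ I J, S I J = ∑ i, (lam i : ℂ) * ∏ k, u i (I k) * (starRingEnd ℂ) (u i (J k))) :
    ∀ t : ℕ, m + 1 ≤ t → ∃ z : (Fin n × Fin 2 → ℕ) → ℝ,
      Matrix.PosSemidef (Matrix.of
        fun α β : {a : Fin n × Fin 2 → Fin (t + 1) // (∑ v, (a v : ℕ)) ≤ t} =>
          z (fun v => (α.1 v : ℕ) + (β.1 v : ℕ))) ∧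
      (∀ α β : Fin n × Fin 2 → ℕ,
        (∑ v, α v) ≤ t - 1 → (∑ v, β v) ≤ t - 1 →
        (∑ γ ∈ (spherePolyS n).support, MvPolynomial.coeff γ (spherePolyS n) *
          z (fun v => α v + β v + γ v)) = 0) ∧
      ∀ I J, (S I J).re = riesz z (R I J) ∧ (S I J).im = riesz z (T I J) :=
  relaxation_feasible_of_symPosHermitianDecomp_general m n S R T hRT hdecomp
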